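/- arXiv:0811.4272 — 4 statements merged into one kernel-verified Lean document; each statement's English description precedes it below -/
import Mathlib

section
/- Let X be a Tychonoff space with dense subspace D such that every continuous real-valued function on D extends continuously to X. Let Z be a metric space and p : X → Z continuous such that p|D : D → Z is an open surjective map. Then for every open set U ⊆ X one has p(U) = p(U ∩ D); in particular p is an open map. -/
/-!
If `p x` had no preimage in `U ∩ D`, then `h y = dist (p y) (p x) + f y`, with `f` a Urysohn
function that vanishes at `x` and equals `1` off `U`, would be a continuous function on `X` with
no zero on `D` but a zero at `x`. This is impossible when the dense set `D` is C-embedded: the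
extension `F` of `1 / h` from `D` satisfies `F * h = 1` on `D`, hence everywhere.
-/

open Set

def IsCEmbedded {X : Type*} [TopologicalSpace X] (D : Set X) : Prop :=
  ∀ f : D → ℝ, Continuous f → ∃ F : X → ℝ, Continuous F ∧ ∀ d : D, F d = f d

namespace IsCEmbedded

variable {X : Type*} [TopologicalSpace X] {D : Set X}

theorem apply_ne_zero (hD : IsCEmbedded D) (hdense : Dense D) {h : X → ℝ} (hh : Continuous h)
    (h0 : ∀ y ∈ D, h y ≠ 0) (x : X) : h x ≠ 0 := by
  obtain ⟨F, hF, hFD⟩ :=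
    hD (fun d => (h d)⁻¹) ((hh.comp continuous_subtype_val).inv₀ fun d => h0 d d.2)
  have hFh : F * h = 1 := by
    refine Continuous.ext_on hdense (hF.mul hh) continuous_const fun y hy => ?_
    simp only [Pi.mul_apply, Pi.one_apply, hFD ⟨y, hy⟩]
    exact inv_mul_cancel₀ (h0 y hy)
  intro hx
  simpa [hx] using congr_fun hFh x

theorem image_subset_image_inter [CompletelyRegularSpace X] {Z : Type*} [MetricSpace Z]
    (hD : IsCEmbedded D) (hdense : Dense D) {p : X → Z} (hp : Continuous p) {U : Set X}
    (hU : IsOpen U) : p '' U ⊆ p '' (U ∩ D) := by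
  rintro _ ⟨x, hxU, rfl⟩
  obtain ⟨f, hf, hfx, hfU⟩ := CompletelyRegularSpace.completely_regular_isOpen x U hU hxU
  have hh : Continuous fun y => dist (p y) (p x) + f y :=
    (hp.dist continuous_const).add (continuous_subtype_val.comp hf)
  by_contra hnot
  refine hD.apply_ne_zero hdense hh (fun y hyD hy => hnot ?_) x (by simp [hfx])
  obtain ⟨hdist, hfy⟩ := (add_eq_zero_iff_of_nonneg dist_nonneg (f y).2.1).mp hy
  have hyU : y ∈ U := by
    by_contra hyU
    simp [hfU hyU] at hfy
  exact ⟨y, ⟨hyU, hyD⟩, dist_eq_zero.mp hdist⟩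

end IsCEmbedded

theorem stmt_1_general {X Z : Type*} [TopologicalSpace X] [T35Space X] [MetricSpace Z]
    (D : Set X) (hD : Dense D)
    (hext : ∀ f : D → ℝ, Continuous f → ∃ F : X → ℝ, Continuous F ∧ ∀ d : D, F d = f d)
    (p : X → Z) (hp : Continuous p)
    (hopen : ∀ U : Set X, IsOpen U → IsOpen (p '' (U ∩ D))) :
    (∀ U : Set X, IsOpen U → p '' U = p '' (U ∩ D)) ∧ IsOpenMap p := by
  have himage : ∀ U : Set X, IsOpen U → p '' U = p '' (U ∩ D) := fun U hU =>
    (IsCEmbedded.image_subset_image_inter hext hD hp hU).antisymm (image_mono inter_subset_left)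
  exact ⟨himage, fun U hU => himage U hU ▸ hopen U hU⟩

/-- Lemma 2.1 (openness, direct direction): if `p|D` is open and surjective then
`p (U) = p (U ∩ D)` for all open `U ⊆ X`, and `p` is open. -/
theorem stmt_1 {X Z : Type*} [TopologicalSpace X] [T35Space X] [MetricSpace Z]
    (D : Set X) (hD : Dense D)
    (hext : ∀ f : D → ℝ, Continuous f → ∃ F : X → ℝ, Continuous F ∧ ∀ d : D, F d = f d)
    (p : X → Z) (hp : Continuous p)
    (hsurj : ∀ z : Z, ∃ d ∈ D, p d = z)
    (hopen : ∀ U : Set X, IsOpen U → IsOpen (p '' (U ∩ D))) :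
    (∀ U : Set X, IsOpen U → p '' U = p '' (U ∩ D)) ∧ IsOpenMap p :=
  stmt_1_general D hD hext p hp hopen
end

section
/- Let X be a Tychonoff space, D ⊆ X a dense subspace, Z a metric space, and p : X → Z a continuous open map. Then the restriction p|D : D → Z is an open map from D to Z (images of relatively open subsets of D are open in Z), provided every continuous real-valued function on D extends continuously to X. -/
/-- Lemma 2.1 (openness, converse direction): if `p : X → Z` is a continuous open map and
every continuous real function on the dense subset `D` extends continuously to `X`, then the
restriction `p|D` is open: images of relatively open subsets of `D` are open in `Z`. -/
theorem stmt_2 {X Z : Type*} [TopologicalSpace X] [T35Space X] [MetricSpace Z]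
    (D : Set X) (hD : Dense D)
    (hext : ∀ f : D → ℝ, Continuous f → ∃ F : X → ℝ, Continuous F ∧ ∀ d : D, F d = f d)
    (p : X → Z) (hp : Continuous p) (hopen : IsOpenMap p) :
    ∀ U : Set X, IsOpen U → IsOpen (p '' (U ∩ D)) := by
  intro U hU
  rw [isOpen_iff_mem_nhds]
  rintro z ⟨x, ⟨hxU, hxD⟩, rfl⟩
  -- complete regularity: f = 0 at x, f = 1 on Uᶜ
  obtain ⟨f, hf_cont, hfx, hfK⟩ :=
    CompletelyRegularSpace.completely_regular x Uᶜ hU.isClosed_compl (by simpa using hxU)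
  -- V : open nbhd of x inside U
  set V : Set X := {t | (f t : ℝ) < 1/2} with hV
  have hV_open : IsOpen V := isOpen_lt (continuous_subtype_val.comp hf_cont) continuous_const
  have hxV : x ∈ V := by
    simp only [hV, Set.mem_setOf_eq, hfx]
    norm_num
  -- points with f t < 1 are in U
  have hmemU : ∀ t : X, (f t : ℝ) < 1 → t ∈ U := by
    intro t ht
    by_contra h
    have := hfK h
    rw [this] at ht
    norm_num at ht
  -- key claim : p '' V ⊆ p '' (U ∩ D)
  have key : p '' V ⊆ p '' (U ∩ D) := by
    rintro w ⟨y, hyV, rfl⟩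
    -- the auxiliary nonnegative function φ
    set φ : X → ℝ := fun t => max ((f t : ℝ) - 1/2) 0 + dist (p t) (p y) with hφ
    have hφ_cont : Continuous φ :=
      (((continuous_subtype_val.comp hf_cont).sub continuous_const).max continuous_const).add
        ((hp.dist continuous_const))
    have hφ_nonneg : ∀ t, 0 ≤ φ t := fun t =>
      add_nonneg (le_max_right _ _) dist_nonneg
    have hφy : φ y = 0 := by
      simp only [hφ, dist_self, add_zero, max_eq_right_iff, sub_nonpos]
      exact le_of_lt hyV
    -- there must be a point of D in the zero set of φ
    by_cases hzero : ∃ d ∈ D, φ d = 0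
    · obtain ⟨d, hdD, hd0⟩ := hzero
      have hd0' : max ((f d : ℝ) - 1/2) 0 + dist (p d) (p y) = 0 := hd0
      have h1 : max ((f d : ℝ) - 1/2) 0 = 0 ∧ dist (p d) (p y) = 0 := by
        constructor
        · linarith [le_max_right ((f d : ℝ) - 1/2) (0:ℝ), dist_nonneg (x := p d) (y := p y)]
        · linarith [le_max_right ((f d : ℝ) - 1/2) (0:ℝ), dist_nonneg (x := p d) (y := p y)]
      have hfd : (f d : ℝ) ≤ 1/2 := by
        by_contra h
        have := h1.1
        rw [max_eq_left (by linarith)] at this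
        linarith
      have hdU : d ∈ U := hmemU d (by linarith)
      have hpd : p d = p y := by
        have := h1.2
        rwa [dist_eq_zero] at this
      exact ⟨d, ⟨hdU, hdD⟩, hpd⟩
    · -- otherwise invert φ on D, extend, contradiction with density
      exfalso
      push_neg at hzero
      have hφD_pos : ∀ d : D, 0 < φ d := fun d =>
        lt_of_le_of_ne (hφ_nonneg d) (fun h => hzero d d.2 h.symm)
      have hg_cont : Continuous (fun d : D => (φ d)⁻¹) := by
        apply Continuous.inv₀ (hφ_cont.comp continuous_subtype_val)
        exact fun d => ne_of_gt (hφD_pos d)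
      obtain ⟨F, hF_cont, hF_eq⟩ := hext _ hg_cont
      -- φ * F = 1 on D, hence on X by density
      have hclosed : IsClosed {t : X | φ t * F t = 1} :=
        isClosed_eq (hφ_cont.mul hF_cont) continuous_const
      have hsub : D ⊆ {t : X | φ t * F t = 1} := by
        intro d hd
        have := hF_eq ⟨d, hd⟩
        simp only [Set.mem_setOf_eq]
        rw [this]
        exact mul_inv_cancel₀ (ne_of_gt (hφD_pos ⟨d, hd⟩))
      have hall : ∀ t, φ t * F t = 1 := by
        have : closure D ⊆ {t : X | φ t * F t = 1} := hclosed.closure_subset_iff.mpr hsub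
        intro t
        exact this (hD.closure_eq ▸ Set.mem_univ t : t ∈ closure D)
      have := hall y
      rw [hφy, zero_mul] at this
      norm_num at this
  -- conclude: p '' V is an open nbhd of p x inside p '' (U ∩ D)
  exact Filter.mem_of_superset ((hopen V hV_open).mem_nhds ⟨x, hxV, rfl⟩) key
end

section
/- If a Tychonoff space X is such that its Stone–Čech compactification βX is openly factorizable, then X is pseudocompact. -/
/-- A space `X` is openly factorizable if every continuous map to a second countable space `Y`
factors as `g ∘ p` with `p` a continuous open surjection onto a second countable space. -/
def OpenlyFactorizable (X : Type*) [TopologicalSpace X] : Prop :=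
  ∀ (Y : Type) (_ : TopologicalSpace Y), SecondCountableTopology Y →
    ∀ f : X → Y, Continuous f →
      ∃ (Z : Type) (_ : TopologicalSpace Z), SecondCountableTopology Z ∧
        ∃ (p : X → Z) (g : Z → Y),
          Continuous p ∧ IsOpenMap p ∧ Function.Surjective p ∧ Continuous g ∧ f = g ∘ p

/-!
If `f : X → E` has unbounded range, pick points `t n` of the range pairwise `3` apart and let
`H : βX → [0,1]^ℕ` extend the bumps `x ↦ max 0 (1 - dist (f x) (t n))`. Factor `H = g ∘ p` with
`p : βX → Z` open and `Z` second countable, hence sequentially compact. The images of points of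
the bands `dist (f x) (t n) < 1` have a convergent subsequence, whose limit lies both in the
closure of the union of the even-indexed sets `g ⁻¹' {b | 0 < b n}` and in that of the odd-indexed
ones; as `p` is open, a point of `βX` lies in the closures of the corresponding two unions of
bands. But two disjoint families of bands are separated in `X` by a function of `infDist (f x)`
to the centres of one family, so their closures in `βX` are disjoint.
-/

open Set Filter Metric Bornology

theorem exists_seq_pairwise_le_dist_of_not_isBounded {E : Type*} [PseudoMetricSpace E]
    {s : Set E} (hs : ¬IsBounded s) (c : ℝ) :
    ∃ t : ℕ → E, (∀ n, t n ∈ s) ∧ Pairwise fun m n => c ≤ dist (t m) (t n) := by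
  have : Std.Symm fun x y : E => c ≤ dist x y := ⟨fun x y h => by rwa [dist_comm]⟩
  refine exists_seq_of_forall_finset_exists' (· ∈ s) (fun x y => c ≤ dist x y) fun F _ => ?_
  obtain ⟨y, hys, hyF⟩ :=
    not_subset.1 fun h => hs (F.finite_toSet.isBounded.thickening.subset h)
  refine ⟨y, hys, fun x hx => ?_⟩
  rw [dist_comm]
  exact not_lt.1 fun hlt => hyF (mem_thickening_iff.2 ⟨x, hx, hlt⟩)

theorem SeqCompactSpace.exists_disjoint_closure_biUnion_inter_nonempty {Z : Type*}
    [TopologicalSpace Z] [SeqCompactSpace Z] {G : ℕ → Set Z} (hG : ∀ n, (G n).Nonempty) :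
    ∃ A B : Set ℕ, Disjoint A B ∧
      (closure (⋃ n ∈ A, G n) ∩ closure (⋃ n ∈ B, G n)).Nonempty := by
  choose z hz using hG
  obtain ⟨z₀, φ, hφ, hlim⟩ := SeqCompactSpace.tendsto_subseq z
  have mem_closure_range {ψ : ℕ → ℕ} (hψ : StrictMono ψ) :
      z₀ ∈ closure (⋃ n ∈ range (φ ∘ ψ), G n) :=
    mem_closure_of_tendsto (hlim.comp hψ.tendsto_atTop) <| Eventually.of_forall fun k =>
      mem_biUnion (mem_range_self k) (hz _)
  refine ⟨range (φ ∘ (2 * ·)), range (φ ∘ (2 * · + 1)), ?_, z₀,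
    mem_closure_range (strictMono_mul_left_of_pos two_pos),
    mem_closure_range ((strictMono_mul_left_of_pos two_pos).add_const 1)⟩
  rw [disjoint_iff_forall_ne]
  rintro _ ⟨j, rfl⟩ _ ⟨k, rfl⟩ h
  have : 2 * j = 2 * k + 1 := hφ.injective h
  omega

theorem OpenlyFactorizable.exists_disjoint_closure_biUnion_inter_nonempty {K : Type*}
    [TopologicalSpace K] [CompactSpace K] (hK : OpenlyFactorizable K) {Y : Type}
    [TopologicalSpace Y] [SecondCountableTopology Y] {H : K → Y} (hH : Continuous H)
    {O : ℕ → Set Y} (hO : ∀ n, (H ⁻¹' O n).Nonempty) :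
    ∃ A B : Set ℕ, Disjoint A B ∧
      (closure (⋃ n ∈ A, H ⁻¹' O n) ∩ closure (⋃ n ∈ B, H ⁻¹' O n)).Nonempty := by
  obtain ⟨Z, _, _, p, g, hp, hpo, hps, -, rfl⟩ := hK Y _ ‹_› H hH
  have : CompactSpace Z := hps.compactSpace hp
  obtain ⟨A, B, hAB, z, hzA, hzB⟩ :=
    SeqCompactSpace.exists_disjoint_closure_biUnion_inter_nonempty (G := fun n => g ⁻¹' O n)
      fun n => let ⟨w, hw⟩ := hO n; ⟨p w, hw⟩
  obtain ⟨w, rfl⟩ := hps z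
  have closure_preimage (S : Set ℕ) : closure (⋃ n ∈ S, (g ∘ p) ⁻¹' O n) =
      p ⁻¹' closure (⋃ n ∈ S, g ⁻¹' O n) := by
    simp only [preimage_comp, ← preimage_iUnion₂, hpo.preimage_closure_eq_closure_preimage hp]
  refine ⟨A, B, hAB, w, ?_⟩
  rw [mem_inter_iff, closure_preimage, closure_preimage]
  exact ⟨hzA, hzB⟩

theorem closure_subset_preimage_singleton_of_dense {K Y : Type*} [TopologicalSpace K]
    [TopologicalSpace Y] [T1Space Y] {D U : Set K} (hD : Dense D) (hU : IsOpen U) {e : K → Y}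
    (he : Continuous e) {a : Y} (hea : ∀ x ∈ U ∩ D, e x = a) : closure U ⊆ e ⁻¹' {a} :=
  closure_minimal ((hD.open_subset_closure_inter hU).trans
    (closure_minimal hea (isClosed_singleton.preimage he))) (isClosed_singleton.preimage he)

theorem StoneCech.disjoint_closure_of_separated {X Y : Type*} [TopologicalSpace X]
    [TopologicalSpace Y] [T2Space Y] [CompactSpace Y] {U V : Set (StoneCech X)}
    (hU : IsOpen U) (hV : IsOpen V) {v : X → Y} (hv : Continuous v) {a b : Y} (hab : a ≠ b)
    (hvU : ∀ x, stoneCechUnit x ∈ U → v x = a) (hvV : ∀ x, stoneCechUnit x ∈ V → v x = b) :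
    Disjoint (closure U) (closure V) := by
  have closure_subset {W : Set (StoneCech X)} (hW : IsOpen W) {c : Y}
      (hvW : ∀ x, stoneCechUnit x ∈ W → v x = c) :
      closure W ⊆ stoneCechExtend hv ⁻¹' {c} :=
    closure_subset_preimage_singleton_of_dense denseRange_stoneCechUnit hW
      (continuous_stoneCechExtend hv) fun _ ⟨hxW, x, hx⟩ => by
        subst hx; rw [stoneCechExtend_stoneCechUnit]; exact hvW x hxW
  exact ((disjoint_singleton.2 hab).preimage _).mono
    (closure_subset hU hvU) (closure_subset hV hvV)

theorem StoneCech.disjoint_closure_biUnion_of_pairwise_le_dist {X E : Type*}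
    [TopologicalSpace X] [PseudoMetricSpace E] {f : X → E} (hf : Continuous f) {t : ℕ → E}
    (ht : Pairwise fun m n => 3 ≤ dist (t m) (t n)) {U : ℕ → Set (StoneCech X)}
    (hU : ∀ n, IsOpen (U n)) (hUt : ∀ x n, stoneCechUnit x ∈ U n → dist (f x) (t n) < 1)
    {A B : Set ℕ} (hAB : Disjoint A B) :
    Disjoint (closure (⋃ n ∈ A, U n)) (closure (⋃ n ∈ B, U n)) := by
  rcases A.eq_empty_or_nonempty with rfl | hA
  · simp
  refine disjoint_closure_of_separated (isOpen_biUnion fun n _ => hU n)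
    (isOpen_biUnion fun n _ => hU n) (v := fun x => projIcc (0 : ℝ) 1 zero_le_one
      (infDist (f x) (t '' A) - 1)) (by fun_prop) (zero_ne_one' unitInterval) ?_ ?_
  · simp only [mem_iUnion₂]
    rintro x ⟨n, hn, hx⟩
    apply projIcc_of_le_left
    linarith [hUt x n hx, infDist_le_dist_of_mem (x := f x) (mem_image_of_mem t hn)]
  · simp only [mem_iUnion₂]
    rintro x ⟨n, hn, hx⟩
    apply projIcc_of_right_le
    suffices 2 ≤ infDist (f x) (t '' A) by linarith
    rw [le_infDist (hA.image t)]
    rintro _ ⟨m, hm, rfl⟩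
    linarith [ht (hAB.ne_of_mem hm hn), hUt x n hx, dist_triangle (t m) (f x) (t n),
      dist_comm (f x) (t m)]

theorem StoneCech.isBounded_range_of_openlyFactorizable {X E : Type*} [TopologicalSpace X]
    [PseudoMetricSpace E] (h : OpenlyFactorizable (StoneCech X)) {f : X → E}
    (hf : Continuous f) : IsBounded (range f) := by
  by_contra hunb
  obtain ⟨t, hts, ht⟩ := exists_seq_pairwise_le_dist_of_not_isBounded hunb 3
  choose x hx using hts
  let bumps : X → ℕ → unitInterval := fun y n =>
    projIcc 0 1 zero_le_one (1 - dist (f y) (t n))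
  have hbumps : Continuous bumps := by fun_prop
  let H := stoneCechExtend hbumps
  have mem_iff (y : X) (n : ℕ) :
      stoneCechUnit y ∈ H ⁻¹' {b | 0 < b n} ↔ dist (f y) (t n) < 1 := by
    rw [mem_preimage, show H (stoneCechUnit y) = bumps y from
      stoneCechExtend_stoneCechUnit hbumps y, mem_ofPred_eq, ← Subtype.coe_lt_coe]
    simp [bumps, coe_projIcc]
  obtain ⟨A, B, hAB, hmeet⟩ := h.exists_disjoint_closure_biUnion_inter_nonempty
    (continuous_stoneCechExtend hbumps) (O := fun n => {b | 0 < b n})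
    fun n => ⟨stoneCechUnit (x n), (mem_iff _ _).2 (by simp [hx])⟩
  have hopen (n : ℕ) : IsOpen (H ⁻¹' {b | 0 < b n}) :=
    (isOpen_lt continuous_const (continuous_apply n)).preimage (continuous_stoneCechExtend _)
  exact not_disjoint_iff_nonempty_inter.2 hmeet <|
    disjoint_closure_biUnion_of_pairwise_le_dist hf ht hopen (fun y n => (mem_iff y n).1) hAB

theorem stmt_4_general (X : Type) [TopologicalSpace X]
    (h : OpenlyFactorizable (StoneCech X)) :
    ∀ f : X → ℝ, Continuous f → ∃ M : ℝ, ∀ x : X, |f x| ≤ M := by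
  intro f hf
  obtain ⟨M, hM⟩ :=
    isBounded_iff_forall_norm_le.1 (StoneCech.isBounded_range_of_openlyFactorizable h hf)
  exact ⟨M, forall_mem_range.1 hM⟩

/-- Proposition 2.3 (one direction): if the Stone–Čech compactification `βX` of a Tychonoff
space `X` is openly factorizable, then `X` is pseudocompact (every continuous real-valued
function on `X` is bounded). -/
theorem stmt_4 (X : Type) [TopologicalSpace X] [T35Space X]
    (h : OpenlyFactorizable (StoneCech X)) :
    ∀ f : X → ℝ, Continuous f → ∃ M : ℝ, ∀ x : X, |f x| ≤ M :=
  stmt_4_general X h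
end

section
/- Let S and T be topological spaces with S × S pseudocompact following Glicksberg's theorem, i.e., assume that the canonical map β(S × S) → βS × βS is a homeomorphism. Suppose μ : S × S → S is a continuous associative operation and μ̄ : βS × βS → βS is a separately continuous associative operation extending μ. Then μ̄ is jointly continuous. -/
/-- Theorem 1.3 (key step): if the canonical map `β(S × S) → βS × βS` is a homeomorphism
(which holds when `S × S` is pseudocompact, by Glicksberg's theorem), `μ` is a continuous
associative operation on `S`, and `μ̄` is a separately continuous associative operation on
`βS` extending `μ`, then `μ̄` is jointly continuous. -/
theorem stmt_6 (S : Type) [TopologicalSpace S] [T35Space S]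
    (μ : S → S → S) (hμcont : Continuous fun p : S × S => μ p.1 p.2)
    (hμassoc : ∀ x y z : S, μ (μ x y) z = μ x (μ y z))
    (i : S × S → StoneCech S × StoneCech S)
    (hi : i = fun p => (stoneCechUnit p.1, stoneCechUnit p.2))
    (hicont : Continuous i)
    (hglick : IsHomeomorph (stoneCechExtend hicont))
    (μ' : StoneCech S → StoneCech S → StoneCech S)
    (hsep : (∀ a : StoneCech S, Continuous (μ' a)) ∧
      (∀ a : StoneCech S, Continuous fun x => μ' x a))
    (hassoc : ∀ x y z : StoneCech S, μ' (μ' x y) z = μ' x (μ' y z))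
    (hext : ∀ s t : S, μ' (stoneCechUnit s) (stoneCechUnit t) = stoneCechUnit (μ s t)) :
    Continuous fun p : StoneCech S × StoneCech S => μ' p.1 p.2 := by
  -- the map S × S → βS, p ↦ unit (μ p.1 p.2)
  have hmcont : Continuous fun p : S × S => stoneCechUnit (μ p.1 p.2) :=
    continuous_stoneCechUnit.comp hμcont
  -- homeomorphism E : β(S × S) ≃ₜ βS × βS
  let E : StoneCech (S × S) ≃ₜ StoneCech S × StoneCech S := hglick.homeomorph
  have hE : ∀ x, E x = stoneCechExtend hicont x := fun _ => rfl
  -- the continuous candidate F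
  let F : StoneCech S × StoneCech S → StoneCech S :=
    (stoneCechExtend hmcont) ∘ E.symm
  have hFcont : Continuous F :=
    (continuous_stoneCechExtend hmcont).comp E.symm.continuous
  -- F agrees with μ' on pairs of units
  have hFunit : ∀ s t : S, F (stoneCechUnit s, stoneCechUnit t)
      = stoneCechUnit (μ s t) := by
    intro s t
    have h1 : E (stoneCechUnit (s, t)) = (stoneCechUnit s, stoneCechUnit t) := by
      rw [hE]
      exact (congrFun (stoneCechExtend_extends hicont) (s, t)).trans (by rw [hi])
    have h2 : E.symm (stoneCechUnit s, stoneCechUnit t) = stoneCechUnit (s, t) := by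
      rw [← h1, Homeomorph.symm_apply_apply]
    show stoneCechExtend hmcont (E.symm (stoneCechUnit s, stoneCechUnit t))
        = stoneCechUnit (μ s t)
    rw [h2]
    exact congrFun (stoneCechExtend_extends hmcont) (s, t)
  -- first density argument: for units s, F (unit s, y) = μ' (unit s) y for all y
  have step1 : ∀ (s : S) (y : StoneCech S),
      F (stoneCechUnit s, y) = μ' (stoneCechUnit s) y := by
    intro s
    have := denseRange_stoneCechUnit (α := S)
    have heq : (fun y => F (stoneCechUnit s, y)) = μ' (stoneCechUnit s) := by
      apply this.equalizer
      · exact hFcont.comp (Continuous.prodMk_right _)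
      · exact hsep.1 _
      · funext t
        simp only [Function.comp_apply]
        rw [hFunit s t, hext s t]
    exact fun y => congrFun heq y
  -- second density argument: F = μ' everywhere
  have step2 : ∀ (x y : StoneCech S), F (x, y) = μ' x y := by
    intro x y
    have := denseRange_stoneCechUnit (α := S)
    have heq : (fun x => F (x, y)) = fun x => μ' x y := by
      apply this.equalizer
      · exact hFcont.comp (continuous_id.prodMk continuous_const)
      · exact hsep.2 _
      · funext s
        exact step1 s y
    exact congrFun heq x
  have : F = fun p : StoneCech S × StoneCech S => μ' p.1 p.2 := by
    funext p; exact step2 p.1 p.2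
  rw [← this]; exact hFcont
end
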